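/- The perpendicular through the incenter meets the side internally: let D, E, F ∈ ℝ² be affinely independent with incenter I. Then there exists a point P in the open segment between D and E (P ∈ openSegment ℝ D E) with ⟪P − I, D − I⟫ = 0; that is, the line through I perpendicular to DI intersects the interior of side DE. -/

import Mathlib

noncomputable section

open EuclideanGeometry Real
open scoped RealInnerProductSpace

/-- The Euclidean plane. -/
abbrev Plane : Type := EuclideanSpace ℝ (Fin 2)

/-- The incenter of triangle `ABC`: the barycentric combination with weights
proportional to the opposite side lengths. -/
def triIncenter (A B C : Plane) : Plane :=
  (dist B C / (dist B C + dist C A + dist A B)) • A +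
  (dist C A / (dist B C + dist C A + dist A B)) • B +
  (dist A B / (dist B C + dist C A + dist A B)) • C

/-!
At the incenter `I` of a triangle `DEF` with side lengths `a, b, c` opposite `D, E, F`,
`⟪E - I, D - I⟫ = -c (c + b - a) (c + a - b) / (2 (a + b + c))`, which is negative by the
strict triangle inequalities: the angle `DIE` (equal to `π/2 + F/2`) is obtuse. Hence `D` and `E`
lie strictly on opposite sides of the line through `I` perpendicular to `DI`, and that line meets
the open segment `DE`.
-/

section InnerProductSpace

variable {V : Type*} [NormedAddCommGroup V] [InnerProductSpace ℝ V]

theorem exists_mem_openSegment_inner_sub_eq_zero {D E I v : V}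
    (hD : 0 < ⟪D - I, v⟫) (hE : ⟪E - I, v⟫ < 0) :
    ∃ P ∈ openSegment ℝ D E, ⟪P - I, v⟫ = 0 := by
  set t := ⟪D - I, v⟫ / (⟪D - I, v⟫ - ⟪E - I, v⟫)
  have ht : 0 < t ∧ t < 1 :=
    ⟨div_pos hD (by linarith), (div_lt_one (by linarith)).mpr (by linarith)⟩
  refine ⟨(1 - t) • D + t • E, ⟨1 - t, t, by linarith, ht.1, by ring, rfl⟩, ?_⟩
  have hP : (1 - t) • D + t • E - I = (1 - t) • (D - I) + t • (E - I) := by module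
  have ht_mul : t * (⟪D - I, v⟫ - ⟪E - I, v⟫) = ⟪D - I, v⟫ := div_mul_cancel₀ _ (by linarith)
  rw [hP, inner_add_left, real_inner_smul_left, real_inner_smul_left]
  linear_combination -ht_mul

theorem exists_mem_openSegment_inner_sub_eq_zero_of_inner_neg {D E I : V}
    (h : ⟪E - I, D - I⟫ < 0) : ∃ P ∈ openSegment ℝ D E, ⟪P - I, D - I⟫ = 0 := by
  have hDI : D - I ≠ 0 := fun h0 => by simp [h0] at h
  refine exists_mem_openSegment_inner_sub_eq_zero ?_ h
  rwa [real_inner_self_eq_norm_sq, sq_pos_iff, norm_ne_zero_iff]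

end InnerProductSpace

theorem dist_lt_dist_add_dist_of_not_collinear {V P : Type*} [NormedAddCommGroup V]
    [NormedSpace ℝ V] [StrictConvexSpace ℝ V] [MetricSpace P] [NormedAddTorsor V P] {A B C : P}
    (h : ¬Collinear ℝ ({A, B, C} : Set P)) : dist A C < dist A B + dist B C :=
  dist_lt_dist_add_dist_iff.mpr fun hABC => h hABC.collinear

theorem triIncenter_sub_right (A B C : Plane) (h : dist B C + dist C A + dist A B ≠ 0) :
    triIncenter A B C - C = (dist B C / (dist B C + dist C A + dist A B)) • (A - C) +
      (dist C A / (dist B C + dist C A + dist A B)) • (B - C) := by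
  rw [triIncenter]
  match_scalars <;> field_simp
  ring

theorem inner_sub_triIncenter_sub_triIncenter (D E F : Plane) (hDE : D ≠ E) :
    ⟪E - triIncenter D E F, D - triIncenter D E F⟫ =
      -(dist D E * (dist D E + dist F D - dist E F) * (dist D E + dist E F - dist F D)) /
        (2 * (dist E F + dist F D + dist D E)) := by
  have hs : dist E F + dist F D + dist D E ≠ 0 := by
    have : 0 < dist D E := dist_pos.mpr hDE
    positivity
  have hDF : ‖D - F‖ = dist F D := by rw [← dist_eq_norm, dist_comm]
  have hEF : ‖E - F‖ = dist E F := (dist_eq_norm E F).symm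
  have hDEF : ⟪D - F, E - F⟫ = (dist F D ^ 2 + dist E F ^ 2 - dist D E ^ 2) / 2 := by
    rw [real_inner_eq_norm_mul_self_add_norm_mul_self_sub_norm_sub_mul_self_div_two,
      sub_sub_sub_cancel_right, hDF, hEF, ← dist_eq_norm]
    ring
  rw [← sub_sub_sub_cancel_right E _ F, ← sub_sub_sub_cancel_right D _ F,
    triIncenter_sub_right D E F hs]
  generalize D - F = u at hDF hDEF ⊢
  generalize E - F = w at hEF hDEF ⊢
  simp only [inner_sub_left, inner_sub_right, inner_add_left, inner_add_right,
    real_inner_smul_left, real_inner_smul_right]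
  rw [real_inner_self_eq_norm_sq, real_inner_self_eq_norm_sq, real_inner_comm u w, hDF, hEF, hDEF]
  field_simp
  ring

theorem inner_sub_triIncenter_sub_triIncenter_neg {D E F : Plane}
    (h : AffineIndependent ℝ ![D, E, F]) :
    ⟪E - triIncenter D E F, D - triIncenter D E F⟫ < 0 := by
  have hDEF : ¬Collinear ℝ ({D, E, F} : Set Plane) := affineIndependent_iff_not_collinear_set.mp h
  have hDE : D ≠ E := by simpa using h.injective.ne (show (0 : Fin 3) ≠ 1 by decide)
  have hc : 0 < dist D E := dist_pos.mpr hDE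
  have ha : dist E F < dist E D + dist D F :=
    dist_lt_dist_add_dist_of_not_collinear (by rwa [Set.insert_comm])
  have hb : dist F D < dist F E + dist E D :=
    dist_lt_dist_add_dist_of_not_collinear
      (by rwa [Set.insert_comm, Set.pair_comm, Set.insert_comm])
  rw [dist_comm E D, dist_comm D F] at ha
  rw [dist_comm F E, dist_comm E D] at hb
  rw [inner_sub_triIncenter_sub_triIncenter D E F hDE, neg_div, neg_lt_zero]
  exact div_pos (mul_pos (mul_pos hc (by linarith)) (by linarith)) (by positivity)

/-- The perpendicular to `DI` through the incenter `I` meets the open side `DE`. -/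
theorem perp_through_incenter_meets_side (D E F : Plane)
    (hDEF : AffineIndependent ℝ ![D, E, F])
    (I : Plane) (hI : I = triIncenter D E F) :
    ∃ P ∈ openSegment ℝ D E, ⟪P - I, D - I⟫ = 0 := by
  subst hI
  exact exists_mem_openSegment_inner_sub_eq_zero_of_inner_neg
    (inner_sub_triIncenter_sub_triIncenter_neg hDEF)
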